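/- arXiv:2603.16006 — 4 statements merged into one kernel-verified Lean document; each statement's English description precedes it below -/
import Mathlib

section
/- Suppose two investors have wealths a₁, a₂ > 0 and heterogeneous returns r₁, r₂ > −1 with r₁ ≠ r₂, and let the capital income tax rate satisfy τ_k ≠ 0. Then there exists no single wealth tax rate τ_a such that, simultaneously for both investors, (1 − τ_a)·(1 + rᵢ)·aᵢ = aᵢ + (1 − τ_k)·rᵢ·aᵢ (i = 1, 2). The equivalence between the capital income tax and the wealth tax breaks under heterogeneous returns. -/
lemma wealth_tax_eq_capital_income_tax_iff {a r τa τk : ℝ} (ha : a ≠ 0) :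
    (1 - τa) * (1 + r) * a = a + (1 - τk) * r * a ↔ τa * (1 + r) = τk * r := by
  have hdiff : (1 - τa) * (1 + r) * a - (a + (1 - τk) * r * a) = (τk * r - τa * (1 + r)) * a := by
    ring
  rw [← sub_eq_zero, hdiff, mul_eq_zero, or_iff_left ha, sub_eq_zero, eq_comm]

lemma eq_zero_of_mul_one_add_eq_mul_of_ne {r₁ r₂ τa τk : ℝ} (hne : r₁ ≠ r₂)
    (h₁ : τa * (1 + r₁) = τk * r₁) (h₂ : τa * (1 + r₂) = τk * r₂) : τk = 0 := by
  have hprod : (τa - τk) * (r₁ - r₂) = 0 := by linear_combination h₁ - h₂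
  have hτ : τa = τk := sub_eq_zero.mp <| (mul_eq_zero.mp hprod).resolve_right (sub_ne_zero.mpr hne)
  subst hτ
  linear_combination h₁

theorem no_common_wealth_tax_rate_under_heterogeneous_returns_general
    (a₁ a₂ r₁ r₂ τk : ℝ) (ha₁ : 0 < a₁) (ha₂ : 0 < a₂)
    (hne : r₁ ≠ r₂) (hτk : τk ≠ 0) :
    ¬ ∃ τa : ℝ,
      (1 - τa) * (1 + r₁) * a₁ = a₁ + (1 - τk) * r₁ * a₁ ∧
      (1 - τa) * (1 + r₂) * a₂ = a₂ + (1 - τk) * r₂ * a₂ := by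
  rintro ⟨τa, h₁, h₂⟩
  rw [wealth_tax_eq_capital_income_tax_iff ha₁.ne'] at h₁
  rw [wealth_tax_eq_capital_income_tax_iff ha₂.ne'] at h₂
  exact hτk (eq_zero_of_mul_one_add_eq_mul_of_ne hne h₁ h₂)

/-- Under heterogeneous returns `r₁ ≠ r₂` and a nonzero capital income tax rate
`τ_k`, no single wealth tax rate `τ_a` replicates the capital income tax for
both investors simultaneously. -/
theorem no_common_wealth_tax_rate_under_heterogeneous_returns
    (a₁ a₂ r₁ r₂ τk : ℝ) (ha₁ : 0 < a₁) (ha₂ : 0 < a₂)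
    (hr₁ : -1 < r₁) (hr₂ : -1 < r₂) (hne : r₁ ≠ r₂) (hτk : τk ≠ 0) :
    ¬ ∃ τa : ℝ,
      (1 - τa) * (1 + r₁) * a₁ = a₁ + (1 - τk) * r₁ * a₁ ∧
      (1 - τa) * (1 + r₂) * a₂ = a₂ + (1 - τk) * r₂ * a₂ :=
  no_common_wealth_tax_rate_under_heterogeneous_returns_general a₁ a₂ r₁ r₂ τk ha₁ ha₂ hne hτk
end

section
/- Let two investors have equal initial wealth a > 0 and returns −1 < r₁ < r₂, let τ_k ∈ (0,1) be a capital income tax rate and τ_a ∈ (0,1) a wealth tax rate. Then: (i) the ratio of after-tax wealths under the wealth tax equals the pre-tax end-of-period ratio, ((1 − τ_a)(1 + r₂)a)/((1 − τ_a)(1 + r₁)a) = (1 + r₂)/(1 + r₁); and (ii) the ratio of after-tax wealths under the capital income tax is strictly compressed: 1 < (1 + (1 − τ_k)r₂)/(1 + (1 − τ_k)r₁) < (1 + r₂)/(1 + r₁). The stock tax preserves relative wealth positions while the flow tax strictly compresses them. -/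
/-! Writing `s = 1 - τk` for the retained share of the return, the identity
`(1 + r₂)(1 + s r₁) - (1 + s r₂)(1 + r₁) = (1 - s)(r₂ - r₁)` shows that for `0 < s < 1`
the after-tax ratio lies strictly between `1` (the case `s = 0`) and the pre-tax ratio
(the case `s = 1`). The wealth tax only rescales both wealths by `1 - τa`, which cancels. -/

lemma one_add_mul_pos {s r : ℝ} (hs₀ : 0 ≤ s) (hs₁ : s ≤ 1) (hr : -1 < r) :
    0 < 1 + s * r := by
  rcases hs₀.eq_or_lt with rfl | hs₀
  · simp
  · nlinarith [mul_pos hs₀ (show 0 < 1 + r by linarith)]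

lemma one_lt_one_add_mul_div_one_add_mul {s r₁ r₂ : ℝ} (hs : 0 < s)
    (hd : 0 < 1 + s * r₁) (hr₁₂ : r₁ < r₂) :
    1 < (1 + s * r₂) / (1 + s * r₁) := by
  rw [one_lt_div hd]
  nlinarith

lemma one_add_mul_div_one_add_mul_lt {s r₁ r₂ : ℝ} (hs : s < 1) (hr₁ : -1 < r₁)
    (hd : 0 < 1 + s * r₁) (hr₁₂ : r₁ < r₂) :
    (1 + s * r₂) / (1 + s * r₁) < (1 + r₂) / (1 + r₁) := by
  rw [div_lt_div_iff₀ hd (by linarith)]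
  have key : (1 + r₂) * (1 + s * r₁) - (1 + s * r₂) * (1 + r₁) = (1 - s) * (r₂ - r₁) := by
    ring
  nlinarith [mul_pos (sub_pos.2 hs) (sub_pos.2 hr₁₂)]

/-- The stock (wealth) tax preserves the ratio of after-tax wealths, while the
flow (capital income) tax strictly compresses it. -/
theorem stock_tax_preserves_flow_tax_compresses
    (a r₁ r₂ τk τa : ℝ) (ha : 0 < a) (hr₁ : -1 < r₁) (hr₁₂ : r₁ < r₂)
    (hτk : τk ∈ Set.Ioo (0 : ℝ) 1) (hτa : τa ∈ Set.Ioo (0 : ℝ) 1) :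
    ((1 - τa) * (1 + r₂) * a) / ((1 - τa) * (1 + r₁) * a) = (1 + r₂) / (1 + r₁) ∧
    1 < (1 + (1 - τk) * r₂) / (1 + (1 - τk) * r₁) ∧
    (1 + (1 - τk) * r₂) / (1 + (1 - τk) * r₁) < (1 + r₂) / (1 + r₁) := by
  obtain ⟨hτk₀, hτk₁⟩ := hτk
  have hd : 0 < 1 + (1 - τk) * r₁ := one_add_mul_pos (by linarith) (by linarith) hr₁
  refine ⟨?_, one_lt_one_add_mul_div_one_add_mul (by linarith) hd hr₁₂,
    one_add_mul_div_one_add_mul_lt (by linarith) hr₁ hd hr₁₂⟩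
  rw [mul_div_mul_right _ _ ha.ne', mul_div_mul_left _ _ (sub_ne_zero.2 hτa.2.ne')]
end

section
/- Let two investors have equal initial wealth a > 0 and per-period returns −1 < r₁ < r₂, let τ_k ∈ (0,1) and τ_a ∈ (0,1), and let n ≥ 1 be a number of periods. Compounding the after-tax growth factors over n periods, the n-period wealth ratio under the wealth tax is ((1 − τ_a)(1 + r₂))ⁿ / ((1 − τ_a)(1 + r₁))ⁿ = ((1 + r₂)/(1 + r₁))ⁿ, the wealth tax rate cancelling entirely, whereas under the capital income tax the n-period wealth ratio satisfies ((1 + (1 − τ_k)r₂)/(1 + (1 − τ_k)r₁))ⁿ < ((1 + r₂)/(1 + r₁))ⁿ. Hence over repeated periods the divergence of relative wealth is strictly faster under the stock tax than under the flow tax. -/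
/-! A proportional wealth tax multiplies every investor's growth factor by the same `1 - τa`,
so it cancels from any wealth ratio. A capital income tax shrinks each return to `t r` with
`t = 1 - τk ∈ (0, 1)`; cross-multiplying, `(1 + t r₂) / (1 + t r₁) < (1 + r₂) / (1 + r₁)`
reduces to `(1 - t) (r₂ - r₁) > 0`, and compounding preserves the strict inequality. -/

lemma mul_pow_div_mul_pow_cancel_left {K : Type*} [Field K] {c : K} (hc : c ≠ 0) (x y : K)
    (n : ℕ) : (c * x) ^ n / (c * y) ^ n = (x / y) ^ n := by
  rw [← div_pow, mul_div_mul_left _ _ hc]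

lemma one_add_mul_pos_s3 {t r : ℝ} (ht₀ : 0 ≤ t) (ht₁ : t < 1) (hr : -1 < r) :
    0 < 1 + t * r := by
  nlinarith [mul_nonneg ht₀ (by linarith : 0 ≤ 1 + r)]

lemma one_add_mul_div_lt_one_add_div {t r₁ r₂ : ℝ} (ht₀ : 0 ≤ t) (ht₁ : t < 1)
    (hr₁ : -1 < r₁) (hr₁₂ : r₁ < r₂) :
    (1 + t * r₂) / (1 + t * r₁) < (1 + r₂) / (1 + r₁) := by
  rw [div_lt_div_iff₀ (one_add_mul_pos_s3 ht₀ ht₁ hr₁) (by linarith)]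
  nlinarith [mul_pos (sub_pos.mpr ht₁) (sub_pos.mpr hr₁₂)]

theorem compounded_divergence_stock_vs_flow_general
    (r₁ r₂ τk τa : ℝ) (n : ℕ) (hr₁ : -1 < r₁) (hr₁₂ : r₁ < r₂)
    (hτk : τk ∈ Set.Ioo (0 : ℝ) 1) (hτa : τa ∈ Set.Ioo (0 : ℝ) 1) (hn : 1 ≤ n) :
    ((1 - τa) * (1 + r₂)) ^ n / ((1 - τa) * (1 + r₁)) ^ n
      = ((1 + r₂) / (1 + r₁)) ^ n ∧
    ((1 + (1 - τk) * r₂) / (1 + (1 - τk) * r₁)) ^ n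
      < ((1 + r₂) / (1 + r₁)) ^ n := by
  have ht₀ : 0 ≤ 1 - τk := by linarith [hτk.2]
  have ht₁ : 1 - τk < 1 := by linarith [hτk.1]
  refine ⟨mul_pow_div_mul_pow_cancel_left (by linarith [hτa.2]) _ _ n, ?_⟩
  have hratio_nonneg : 0 ≤ (1 + (1 - τk) * r₂) / (1 + (1 - τk) * r₁) :=
    (div_pos (one_add_mul_pos_s3 ht₀ ht₁ (hr₁.trans hr₁₂)) (one_add_mul_pos_s3 ht₀ ht₁ hr₁)).le
  exact pow_lt_pow_left₀ (one_add_mul_div_lt_one_add_div ht₀ ht₁ hr₁ hr₁₂) hratio_nonneg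
    (by omega)

/-- Over `n` compounded periods, the wealth-tax rate cancels from the wealth
ratio, whereas the capital income tax strictly compresses the `n`-period
wealth ratio: relative divergence is strictly faster under the stock tax. -/
theorem compounded_divergence_stock_vs_flow
    (a r₁ r₂ τk τa : ℝ) (n : ℕ) (ha : 0 < a) (hr₁ : -1 < r₁) (hr₁₂ : r₁ < r₂)
    (hτk : τk ∈ Set.Ioo (0 : ℝ) 1) (hτa : τa ∈ Set.Ioo (0 : ℝ) 1) (hn : 1 ≤ n) :
    ((1 - τa) * (1 + r₂)) ^ n / ((1 - τa) * (1 + r₁)) ^ n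
      = ((1 + r₂) / (1 + r₁)) ^ n ∧
    ((1 + (1 - τk) * r₂) / (1 + (1 - τk) * r₁)) ^ n
      < ((1 + r₂) / (1 + r₁)) ^ n :=
  compounded_divergence_stock_vs_flow_general r₁ r₂ τk τa n hr₁ hr₁₂ hτk hτa hn
end

section
/- (Endogenous correlation, one-step version of Proposition 2.) Let (Ω, μ) be a probability space. Let X₀, Z, ε : Ω → ℝ be random variables in L²(μ) such that Z is not almost surely constant, X₀ is independent of Z, ε is independent of Z, and E[ε] = 0. Let v : ℝ → ℝ be strictly monotone increasing and measurable with v∘Z ∈ L²(μ), and let h > 0. Define the updated log-wealth X₁ = X₀ + h·v(Z) + ε. Then Cov(X₁, Z) = h·Cov(v(Z), Z) > 0. Hence, starting from a factored (independent) joint distribution of log-wealth and ability, one step of the ability-dependent drift dynamics creates strictly positive correlation between log-wealth and ability. -/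
open MeasureTheory ProbabilityTheory

/-- Product of two L² functions is integrable. -/
lemma l2_mul_integrable {Ω : Type*} [MeasurableSpace Ω] {μ : Measure Ω}
    {f g : Ω → ℝ} (hf : MemLp f 2 μ) (hg : MemLp g 2 μ) :
    Integrable (fun ω => f ω * g ω) μ := by
  have h := MeasureTheory.L2.integrable_inner (𝕜 := ℝ) (hf.toLp f) (hg.toLp g)
  refine h.congr ?_
  filter_upwards [hf.coeFn_toLp, hg.coeFn_toLp] with ω h1 h2
  simp [h1, h2, RCLike.inner_apply, mul_comm]

/-- Endogenous correlation (one-step version): starting from an independent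
(factored) joint distribution of log-wealth `X₀` and ability `Z`, one step
`X₁ = X₀ + h·v(Z) + ε` of the ability-dependent drift dynamics yields
`Cov(X₁, Z) = h·Cov(v(Z), Z) > 0` for any strictly increasing drift map `v`
and step size `h > 0`. -/
theorem endogenous_correlation_one_step
    {Ω : Type*} [MeasurableSpace Ω] (μ : Measure Ω) [IsProbabilityMeasure μ]
    (X₀ Z ε : Ω → ℝ)
    (hX₀meas : Measurable X₀) (hZmeas : Measurable Z) (hεmeas : Measurable ε)
    (hX₀L2 : MemLp X₀ 2 μ) (hZL2 : MemLp Z 2 μ) (hεL2 : MemLp ε 2 μ)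
    (hZnc : ¬ ∃ c : ℝ, ∀ᵐ ω ∂μ, Z ω = c)
    (hX₀Z : IndepFun X₀ Z μ) (hεZ : IndepFun ε Z μ)
    (hεmean : ∫ ω, ε ω ∂μ = 0)
    (v : ℝ → ℝ) (hv : StrictMono v) (hvmeas : Measurable v)
    (hvZL2 : MemLp (fun ω => v (Z ω)) 2 μ)
    (h : ℝ) (hh : 0 < h)
    (X₁ : Ω → ℝ) (hX₁ : ∀ ω, X₁ ω = X₀ ω + h * v (Z ω) + ε ω) :
    ((∫ ω, X₁ ω * Z ω ∂μ) - (∫ ω, X₁ ω ∂μ) * ∫ ω, Z ω ∂μ)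
      = h * ((∫ ω, v (Z ω) * Z ω ∂μ)
          - (∫ ω, v (Z ω) ∂μ) * ∫ ω, Z ω ∂μ) ∧
    0 < (∫ ω, X₁ ω * Z ω ∂μ) - (∫ ω, X₁ ω ∂μ) * ∫ ω, Z ω ∂μ := by
  -- basic integrability
  have hZint : Integrable Z μ := hZL2.integrable one_le_two
  have hX₀int : Integrable X₀ μ := hX₀L2.integrable one_le_two
  have hεint : Integrable ε μ := hεL2.integrable one_le_two
  have hvZint : Integrable (fun ω => v (Z ω)) μ := hvZL2.integrable one_le_two
  have hX₀Zint : Integrable (fun ω => X₀ ω * Z ω) μ := l2_mul_integrable hX₀L2 hZL2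
  have hεZint : Integrable (fun ω => ε ω * Z ω) μ := l2_mul_integrable hεL2 hZL2
  have hvZZint : Integrable (fun ω => v (Z ω) * Z ω) μ := l2_mul_integrable hvZL2 hZL2
  -- independence factorizations
  have hX₀Zmul : (∫ ω, X₀ ω * Z ω ∂μ) = (∫ ω, X₀ ω ∂μ) * ∫ ω, Z ω ∂μ :=
    hX₀Z.integral_mul_eq_mul_integral hX₀int.1 hZint.1
  have hεZmul : (∫ ω, ε ω * Z ω ∂μ) = (∫ ω, ε ω ∂μ) * ∫ ω, Z ω ∂μ :=
    hεZ.integral_mul_eq_mul_integral hεint.1 hZint.1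
  -- expand the integrals of X₁ and X₁ * Z
  have hint1 : (∫ ω, X₁ ω ∂μ)
      = (∫ ω, X₀ ω ∂μ) + h * (∫ ω, v (Z ω) ∂μ) + ∫ ω, ε ω ∂μ := by
    have : (fun ω => X₁ ω) = fun ω => X₀ ω + h * v (Z ω) + ε ω := funext hX₁
    have ha : Integrable (fun ω => X₀ ω + h * v (Z ω)) μ := hX₀int.add (hvZint.const_mul h)
    rw [this, integral_add ha hεint,
      integral_add hX₀int (hvZint.const_mul h), integral_const_mul]
  have hint2 : (∫ ω, X₁ ω * Z ω ∂μ)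
      = (∫ ω, X₀ ω * Z ω ∂μ) + h * (∫ ω, v (Z ω) * Z ω ∂μ) + ∫ ω, ε ω * Z ω ∂μ := by
    have he : (fun ω => X₁ ω * Z ω)
        = fun ω => X₀ ω * Z ω + h * (v (Z ω) * Z ω) + ε ω * Z ω := by
      funext ω; rw [hX₁ ω]; ring
    have ha : Integrable (fun ω => X₀ ω * Z ω + h * (v (Z ω) * Z ω)) μ :=
      hX₀Zint.add (hvZZint.const_mul h)
    rw [he, integral_add ha hεZint,
      integral_add hX₀Zint (hvZZint.const_mul h), integral_const_mul]
  have key : ((∫ ω, X₁ ω * Z ω ∂μ) - (∫ ω, X₁ ω ∂μ) * ∫ ω, Z ω ∂μ)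
      = h * ((∫ ω, v (Z ω) * Z ω ∂μ) - (∫ ω, v (Z ω) ∂μ) * ∫ ω, Z ω ∂μ) := by
    rw [hint1, hint2, hX₀Zmul, hεZmul, hεmean]; ring
  refine ⟨key, ?_⟩
  rw [key]
  -- it remains to show Cov(v(Z), Z) > 0
  refine mul_pos hh ?_
  -- work on the product space with F(ω,ω') = (v(Z ω) - v(Z ω'))(Z ω - Z ω')
  set F : Ω × Ω → ℝ := fun p => (v (Z p.1) - v (Z p.2)) * (Z p.1 - Z p.2) with hF
  have hFnonneg : ∀ p, 0 ≤ F p := by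
    intro p
    simp only [hF]
    rcases le_total (Z p.1) (Z p.2) with hle | hle
    · nlinarith [hv.monotone hle]
    · nlinarith [hv.monotone hle]
  -- integrability of the four pieces over μ.prod μ
  have I1 : Integrable (fun p : Ω × Ω => v (Z p.1) * Z p.1) (μ.prod μ) := by
    have := hvZZint.mul_prod (integrable_const (1 : ℝ)) (ν := μ)
    simpa using this
  have I4 : Integrable (fun p : Ω × Ω => v (Z p.2) * Z p.2) (μ.prod μ) := by
    have := (integrable_const (1 : ℝ)).mul_prod hvZZint (μ := μ)
    simpa using this
  have I2 : Integrable (fun p : Ω × Ω => v (Z p.1) * Z p.2) (μ.prod μ) :=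
    hvZint.mul_prod hZint
  have I3 : Integrable (fun p : Ω × Ω => v (Z p.2) * Z p.1) (μ.prod μ) := by
    have := hZint.mul_prod hvZint
    refine this.congr ?_
    filter_upwards with p using mul_comm _ _
  have hFint : Integrable F (μ.prod μ) := by
    have : F = fun p : Ω × Ω => v (Z p.1) * Z p.1 - v (Z p.1) * Z p.2
        - v (Z p.2) * Z p.1 + v (Z p.2) * Z p.2 := by
      funext p; simp only [hF]; ring
    rw [this]
    have hb : Integrable (fun p : Ω × Ω => v (Z p.1) * Z p.1 - v (Z p.1) * Z p.2) (μ.prod μ) :=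
      I1.sub I2
    have hc : Integrable (fun p : Ω × Ω => v (Z p.1) * Z p.1 - v (Z p.1) * Z p.2
        - v (Z p.2) * Z p.1) (μ.prod μ) := hb.sub I3
    exact hc.add I4
  -- the integral of F equals twice the covariance
  have hP1 : (∫ p : Ω × Ω, v (Z p.1) * Z p.1 ∂(μ.prod μ)) = ∫ ω, v (Z ω) * Z ω ∂μ := by
    have := integral_prod_mul (μ := μ) (ν := μ) (fun ω => v (Z ω) * Z ω) (fun _ => (1 : ℝ))
    simpa using this
  have hP4 : (∫ p : Ω × Ω, v (Z p.2) * Z p.2 ∂(μ.prod μ)) = ∫ ω, v (Z ω) * Z ω ∂μ := by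
    have := integral_prod_mul (μ := μ) (ν := μ) (fun _ => (1 : ℝ)) (fun ω => v (Z ω) * Z ω)
    simpa using this
  have hP2 : (∫ p : Ω × Ω, v (Z p.1) * Z p.2 ∂(μ.prod μ))
      = (∫ ω, v (Z ω) ∂μ) * ∫ ω, Z ω ∂μ :=
    integral_prod_mul (μ := μ) (ν := μ) (fun ω => v (Z ω)) Z
  have hP3 : (∫ p : Ω × Ω, v (Z p.2) * Z p.1 ∂(μ.prod μ))
      = (∫ ω, v (Z ω) ∂μ) * ∫ ω, Z ω ∂μ := by
    have := integral_prod_mul (μ := μ) (ν := μ) Z (fun ω => v (Z ω))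
    rw [show (∫ p : Ω × Ω, v (Z p.2) * Z p.1 ∂(μ.prod μ))
        = ∫ p : Ω × Ω, Z p.1 * v (Z p.2) ∂(μ.prod μ) from by
          exact integral_congr_ae (Filter.Eventually.of_forall fun p => mul_comm _ _),
      this, mul_comm]
  have hFeq : (∫ p, F p ∂(μ.prod μ))
      = 2 * ((∫ ω, v (Z ω) * Z ω ∂μ) - (∫ ω, v (Z ω) ∂μ) * ∫ ω, Z ω ∂μ) := by
    have hexp : F = fun p : Ω × Ω => v (Z p.1) * Z p.1 - v (Z p.1) * Z p.2
        - v (Z p.2) * Z p.1 + v (Z p.2) * Z p.2 := by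
      funext p; simp only [hF]; ring
    have hb : Integrable (fun p : Ω × Ω => v (Z p.1) * Z p.1 - v (Z p.1) * Z p.2) (μ.prod μ) :=
      I1.sub I2
    have hc : Integrable (fun p : Ω × Ω => v (Z p.1) * Z p.1 - v (Z p.1) * Z p.2
        - v (Z p.2) * Z p.1) (μ.prod μ) := hb.sub I3
    rw [hexp, integral_add hc I4, integral_sub hb I3,
      integral_sub I1 I2, hP1, hP2, hP3, hP4]
    ring
  -- F is positive on the set where Z p.1 ≠ Z p.2, which has positive measure
  have hApos : 0 < (μ.prod μ) {p : Ω × Ω | Z p.1 ≠ Z p.2} := by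
    by_contra hcon
    push_neg at hcon
    have h0 : (μ.prod μ) {p : Ω × Ω | Z p.1 ≠ Z p.2} = 0 := le_antisymm hcon bot_le
    have hae : ∀ᵐ p ∂(μ.prod μ), Z p.1 = Z p.2 := by
      rw [MeasureTheory.ae_iff]
      simpa using h0
    have hae2 := Measure.ae_ae_of_ae_prod hae
    have hne : (ae μ).NeBot := ae_neBot.mpr (IsProbabilityMeasure.ne_zero μ)
    obtain ⟨x, hx⟩ := hae2.exists
    exact hZnc ⟨Z x, by filter_upwards [hx] with y hy using hy.symm⟩
  have hsub : {p : Ω × Ω | Z p.1 ≠ Z p.2} ⊆ Function.support F := by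
    intro p hp
    rcases lt_or_gt_of_ne hp with hlt | hlt
    · have h1 := hv hlt
      exact ne_of_gt (mul_pos_of_neg_of_neg (by linarith) (by linarith))
    · have h1 := hv hlt
      exact ne_of_gt (mul_pos (by linarith) (by linarith))
  have hFpos : 0 < ∫ p, F p ∂(μ.prod μ) := by
    rw [integral_pos_iff_support_of_nonneg hFnonneg hFint]
    exact lt_of_lt_of_le hApos (measure_mono hsub)
  rw [hFeq] at hFpos
  linarith
end
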